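/- For the multilayer neural network prediction function h, the gradient of the quadratic loss satisfies the polynomial bound |∇_θ |h(z, θ) − l|²| ≤ C (1 + |y|)² (1 + |θ|^{n+1}) for all θ ∈ ℝ^d and y = (z, l), where the constant C > 0 depends only on D = max_{j=1,…,n} d_j, on the number of layers n, and on M_s. -/

import Mathlib

open scoped RealInnerProductSpace

/-- The index set of the parameter θ = (W₁, …, W_n) of an n-layer network with layer
dimensions dims 0, dims 1, …, dims n : the weight matrix Wᵢ₊₁ ∈ ℝ^{dims (i+1) × dims i}
is indexed by the fiber over i : Fin n. -/
abbrev NetIdx (n : ℕ) (dims : ℕ → ℕ) : Type :=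
  (i : Fin n) × (Fin (dims (i.1 + 1)) × Fin (dims i.1))

/-- The forward pass through the first k layers of the network:
a_0 = z, a_{k+1} = s_{k+1}(W_{k+1} a_k). -/
noncomputable def mlForward (n : ℕ) (dims : ℕ → ℕ) (sact : ℕ → ℝ → ℝ)
    (θ : EuclideanSpace ℝ (NetIdx n dims)) (z : EuclideanSpace ℝ (Fin (dims 0))) :
    (k : ℕ) → Fin (dims k) → ℝ
  | 0 => z
  | (k + 1) => fun j =>
      if hk : k < n then
        sact (k + 1) (∑ i : Fin (dims k), θ ⟨⟨k, hk⟩, (j, i)⟩ * mlForward n dims sact θ z k i)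
      else 0

/-- The n-layer network prediction h(z, θ) = s_n(W_n s_{n-1}(⋯ s_1(W_1 z))). -/
noncomputable def mlNet (n : ℕ) (dims : ℕ → ℕ) (sact : ℕ → ℝ → ℝ)
    (θ : EuclideanSpace ℝ (NetIdx n dims)) (z : EuclideanSpace ℝ (Fin (dims 0))) :
    EuclideanSpace ℝ (Fin (dims n)) :=
  WithLp.toLp 2 (fun j => mlForward n dims sact θ z n j)

/-- The squared loss |h(z,θ) − l|² of the n-layer network, as a function of θ, with
the data point y = (z, l) given in concatenated form. -/
noncomputable def mlLabel (n : ℕ) (dims : ℕ → ℕ)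
    (y : EuclideanSpace ℝ (Fin (dims 0) ⊕ Fin (dims n))) :
    EuclideanSpace ℝ (Fin (dims n)) :=
  WithLp.toLp 2 (fun j => y (Sum.inr j))

noncomputable def mlLoss (n : ℕ) (dims : ℕ → ℕ) (sact : ℕ → ℝ → ℝ)
    (y : EuclideanSpace ℝ (Fin (dims 0) ⊕ Fin (dims n)))
    (θ : EuclideanSpace ℝ (NetIdx n dims)) : ℝ :=
  ‖mlNet n dims sact θ (WithLp.toLp 2 (fun i => y (Sum.inl i))) - mlLabel n dims y‖ ^ 2

/-!
The norm of a derivative is bounded by any local Lipschitz constant, so it suffices to bound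
`|L θ - L θ₀|` by `K(θ₀) ‖θ - θ₀‖`; no derivative has to be computed. Layer outputs are
bounded by `B = max M ‖y‖` and the weights of `θ₀` by `‖θ₀‖`, so writing
`θ e · a - θ₀ e · a₀ = (θ e - θ₀ e) · a + θ₀ e · (a - a₀)` the `k`-th layer output differs
from its value at `θ₀` by at most `B ((M D + 1)(1 + ‖θ₀‖))^k ‖θ - θ₀‖`, where `D` is the
largest layer width. The quadratic loss adds a factor of order `1 + ‖y‖`, and
`(1 + t)^n ≤ 2^n (1 + t^(n+1))`.
-/

open Finset Filter Topology

theorem norm_gradient_le_of_lip' {F : Type*} [NormedAddCommGroup F] [InnerProductSpace ℝ F]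
    [CompleteSpace F] {f : F → ℝ} {x₀ : F} {C : ℝ} (hC : 0 ≤ C)
    (hlip : ∀ᶠ x in 𝓝 x₀, |f x - f x₀| ≤ C * ‖x - x₀‖) : ‖gradient f x₀‖ ≤ C := by
  rw [gradient, LinearIsometryEquiv.norm_map]
  exact norm_fderiv_le_of_lip' ℝ hC hlip

theorem abs_sub_le_of_abs_deriv_le {s : ℝ → ℝ} {M : ℝ} (hs : Differentiable ℝ s)
    (hs' : ∀ x, |deriv s x| ≤ M) (a b : ℝ) : |s a - s b| ≤ M * |a - b| := by
  simpa using convex_univ.norm_image_sub_le_of_norm_deriv_le (fun x _ => hs x)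
    (fun x _ => (Real.norm_eq_abs _).trans_le (hs' x)) (Set.mem_univ b) (Set.mem_univ a)

theorem abs_mul_sub_mul_le {α : Type*} [CommRing α] [LinearOrder α] [IsOrderedRing α]
    (a₁ a₂ b₁ b₂ : α) :
    |a₁ * b₁ - a₂ * b₂| ≤ |a₁ - a₂| * |b₁| + |a₂| * |b₁ - b₂| := by
  rw [← abs_mul, ← abs_mul]
  calc |a₁ * b₁ - a₂ * b₂| = |(a₁ - a₂) * b₁ + a₂ * (b₁ - b₂)| := by ring_nf
    _ ≤ _ := abs_add_le _ _

theorem one_add_pow_le_two_pow_mul {t : ℝ} (ht : 0 ≤ t) (n : ℕ) :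
    (1 + t) ^ n ≤ 2 ^ n * (1 + t ^ (n + 1)) := by
  rcases le_total t 1 with h | h
  · calc (1 + t) ^ n ≤ 2 ^ n := pow_le_pow_left₀ (by positivity) (by linarith) n
      _ ≤ 2 ^ n * (1 + t ^ (n + 1)) :=
        le_mul_of_one_le_right (by positivity) (by linarith [pow_nonneg ht (n + 1)])
  · calc (1 + t) ^ n ≤ (2 * t) ^ n := pow_le_pow_left₀ (by positivity) (by linarith) n
      _ = 2 ^ n * t ^ n := mul_pow 2 t n
      _ ≤ 2 ^ n * (1 + t ^ (n + 1)) := by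
        gcongr
        linarith [pow_le_pow_right₀ h (Nat.le_add_right n 1)]

theorem EuclideanSpace.abs_apply_le_norm {ι : Type*} [Fintype ι] (x : EuclideanSpace ℝ ι)
    (i : ι) : |x i| ≤ ‖x‖ :=
  (Real.norm_eq_abs _).symm.trans_le (PiLp.norm_apply_le x i)

section Network

variable {n : ℕ} {dims : ℕ → ℕ} {sact : ℕ → ℝ → ℝ} {M : ℝ}

theorem mlForward_succ (θ : EuclideanSpace ℝ (NetIdx n dims))
    (z : EuclideanSpace ℝ (Fin (dims 0))) {k : ℕ} (hk : k < n) (j : Fin (dims (k + 1))) :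
    mlForward n dims sact θ z (k + 1) j
      = sact (k + 1) (∑ i, θ ⟨⟨k, hk⟩, (j, i)⟩ * mlForward n dims sact θ z k i) := by
  rw [mlForward]
  exact dif_pos hk

theorem abs_mlForward_le (hsbd : ∀ i, 1 ≤ i → i ≤ n → ∀ x, |sact i x| ≤ M)
    (θ : EuclideanSpace ℝ (NetIdx n dims)) {z : EuclideanSpace ℝ (Fin (dims 0))} {r : ℝ}
    (hz : ∀ j, |z j| ≤ r) {k : ℕ} (hk : k ≤ n) (j : Fin (dims k)) :
    |mlForward n dims sact θ z k j| ≤ max M r := by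
  cases k with
  | zero => exact (hz j).trans (le_max_right M r)
  | succ k =>
    rw [mlForward_succ θ z hk]
    exact (hsbd (k + 1) k.succ_pos hk _).trans (le_max_left M r)

theorem abs_mlForward_succ_sub_le (hM : 0 ≤ M) {k : ℕ} (hk : k < n)
    (hslip : ∀ a b, |sact (k + 1) a - sact (k + 1) b| ≤ M * |a - b|)
    {θ θ₀ : EuclideanSpace ℝ (NetIdx n dims)} {z : EuclideanSpace ℝ (Fin (dims 0))} {B L : ℝ}
    (hB : ∀ i, |mlForward n dims sact θ z k i| ≤ B)
    (hL : ∀ i, |mlForward n dims sact θ z k i - mlForward n dims sact θ₀ z k i|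
      ≤ L * ‖θ - θ₀‖)
    (j : Fin (dims (k + 1))) :
    |mlForward n dims sact θ z (k + 1) j - mlForward n dims sact θ₀ z (k + 1) j|
      ≤ M * dims k * (B + ‖θ₀‖ * L) * ‖θ - θ₀‖ := by
  set a := mlForward n dims sact θ z k
  set a₀ := mlForward n dims sact θ₀ z k
  have hterm (i : Fin (dims k)) :
      |θ ⟨⟨k, hk⟩, (j, i)⟩ * a i - θ₀ ⟨⟨k, hk⟩, (j, i)⟩ * a₀ i| ≤ (B + ‖θ₀‖ * L) * ‖θ - θ₀‖ :=
    calc _ ≤ |(θ - θ₀) ⟨⟨k, hk⟩, (j, i)⟩| * |a i| + |θ₀ ⟨⟨k, hk⟩, (j, i)⟩| * |a i - a₀ i| :=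
          abs_mul_sub_mul_le _ _ _ _
      _ ≤ ‖θ - θ₀‖ * B + ‖θ₀‖ * (L * ‖θ - θ₀‖) := by
          gcongr
          · exact EuclideanSpace.abs_apply_le_norm _ _
          · exact hB i
          · exact EuclideanSpace.abs_apply_le_norm _ _
          · exact hL i
      _ = (B + ‖θ₀‖ * L) * ‖θ - θ₀‖ := by ring
  rw [mlForward_succ θ z hk, mlForward_succ θ₀ z hk]
  calc _ ≤ M * |∑ i, (θ ⟨⟨k, hk⟩, (j, i)⟩ * a i - θ₀ ⟨⟨k, hk⟩, (j, i)⟩ * a₀ i)| := by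
        rw [sum_sub_distrib]
        exact hslip _ _
    _ ≤ M * ∑ _i : Fin (dims k), (B + ‖θ₀‖ * L) * ‖θ - θ₀‖ := by
        gcongr
        exact (abs_sum_le_sum_abs _ _).trans (sum_le_sum fun i _ => hterm i)
    _ = M * dims k * (B + ‖θ₀‖ * L) * ‖θ - θ₀‖ := by
        rw [sum_const, card_univ, Fintype.card_fin, nsmul_eq_mul]
        ring

theorem abs_mlForward_sub_le (hM : 0 ≤ M) (hsbd : ∀ i, 1 ≤ i → i ≤ n → ∀ x, |sact i x| ≤ M)
    (hslip : ∀ i, 1 ≤ i → i ≤ n → ∀ a b, |sact i a - sact i b| ≤ M * |a - b|)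
    {D : ℕ} (hD : ∀ k < n, dims k ≤ D) (θ θ₀ : EuclideanSpace ℝ (NetIdx n dims))
    {z : EuclideanSpace ℝ (Fin (dims 0))} {r : ℝ} (hz : ∀ j, |z j| ≤ r) {k : ℕ} (hk : k ≤ n)
    (j : Fin (dims k)) :
    |mlForward n dims sact θ z k j - mlForward n dims sact θ₀ z k j|
      ≤ max M r * ((M * D + 1) * (1 + ‖θ₀‖)) ^ k * ‖θ - θ₀‖ := by
  induction k with
  | zero =>
    simp only [mlForward, sub_self, abs_zero]
    positivity
  | succ k ih =>
    set B := max M r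
    set c := (M * D + 1) * (1 + ‖θ₀‖)
    have hB : 0 ≤ B := hM.trans (le_max_left M r)
    have hc : 1 ≤ c ^ k := one_le_pow₀ (one_le_mul_of_one_le_of_one_le
      (le_add_of_nonneg_left (by positivity)) (le_add_of_nonneg_right (norm_nonneg _)))
    have hk' : k ≤ n := k.le_succ.trans hk
    refine (abs_mlForward_succ_sub_le hM hk (hslip (k + 1) k.succ_pos hk)
      (fun i => abs_mlForward_le hsbd θ hz hk' i) (fun i => ih hk' i) j).trans ?_
    gcongr ?_ * _
    calc M * dims k * (B + ‖θ₀‖ * (B * c ^ k)) ≤ (M * D + 1) * (B * c ^ k * (1 + ‖θ₀‖)) := by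
          gcongr ?_ * ?_
          · have hdk : (dims k : ℝ) ≤ D := by exact_mod_cast hD k hk
            nlinarith
          · nlinarith [norm_nonneg θ₀]
      _ = B * c ^ (k + 1) := by ring

theorem mlLoss_eq_sum_sq (y : EuclideanSpace ℝ (Fin (dims 0) ⊕ Fin (dims n)))
    (θ : EuclideanSpace ℝ (NetIdx n dims)) :
    mlLoss n dims sact y θ
      = ∑ j, (mlForward n dims sact θ (WithLp.toLp 2 fun i => y (Sum.inl i)) n j
          - y (Sum.inr j)) ^ 2 := by
  rw [mlLoss, EuclideanSpace.real_norm_sq_eq]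
  rfl

theorem abs_mlLoss_sub_le (hM : 0 ≤ M) (hsbd : ∀ i, 1 ≤ i → i ≤ n → ∀ x, |sact i x| ≤ M)
    (hslip : ∀ i, 1 ≤ i → i ≤ n → ∀ a b, |sact i a - sact i b| ≤ M * |a - b|)
    {D : ℕ} (hD : ∀ k ≤ n, dims k ≤ D) (y : EuclideanSpace ℝ (Fin (dims 0) ⊕ Fin (dims n)))
    (θ θ₀ : EuclideanSpace ℝ (NetIdx n dims)) :
    |mlLoss n dims sact y θ - mlLoss n dims sact y θ₀|
      ≤ D * (2 * (max M ‖y‖ + ‖y‖)) * (max M ‖y‖ * ((M * D + 1) * (1 + ‖θ₀‖)) ^ n)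
        * ‖θ - θ₀‖ := by
  set z : EuclideanSpace ℝ (Fin (dims 0)) := WithLp.toLp 2 fun i => y (Sum.inl i)
  have hz (j : Fin (dims 0)) : |z j| ≤ ‖y‖ := y.abs_apply_le_norm (Sum.inl j)
  set a := mlForward n dims sact θ z n
  set a₀ := mlForward n dims sact θ₀ z n
  set B := max M ‖y‖
  set L := B * ((M * D + 1) * (1 + ‖θ₀‖)) ^ n
  have hterm (j : Fin (dims n)) :
      |(a j - y (Sum.inr j)) ^ 2 - (a₀ j - y (Sum.inr j)) ^ 2|
        ≤ 2 * (B + ‖y‖) * (L * ‖θ - θ₀‖) := by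
    have ha := abs_mlForward_le hsbd θ hz le_rfl j
    have ha₀ := abs_mlForward_le hsbd θ₀ hz le_rfl j
    have hl := y.abs_apply_le_norm (Sum.inr j)
    calc _ = |a j + a₀ j - 2 * y (Sum.inr j)| * |a j - a₀ j| := by
          rw [← abs_mul]
          ring_nf
      _ ≤ 2 * (B + ‖y‖) * (L * ‖θ - θ₀‖) := by
          gcongr
          · rw [abs_le] at ha ha₀ hl ⊢
            constructor <;> linarith
          · exact abs_mlForward_sub_le hM hsbd hslip (fun k hk => hD k hk.le) θ θ₀ hz le_rfl j
  rw [mlLoss_eq_sum_sq, mlLoss_eq_sum_sq, ← sum_sub_distrib]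
  calc _ ≤ ∑ _j : Fin (dims n), 2 * (B + ‖y‖) * (L * ‖θ - θ₀‖) :=
        (abs_sum_le_sum_abs _ _).trans (sum_le_sum fun j _ => hterm j)
    _ = dims n * (2 * (B + ‖y‖)) * L * ‖θ - θ₀‖ := by
        rw [sum_const, card_univ, Fintype.card_fin, nsmul_eq_mul]
        ring
    _ ≤ D * (2 * (B + ‖y‖)) * L * ‖θ - θ₀‖ := by
        gcongr
        exact_mod_cast hD n le_rfl

theorem norm_gradient_mlLoss_le (hM : 0 ≤ M) (hsbd : ∀ i, 1 ≤ i → i ≤ n → ∀ x, |sact i x| ≤ M)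
    (hslip : ∀ i, 1 ≤ i → i ≤ n → ∀ a b, |sact i a - sact i b| ≤ M * |a - b|)
    {D : ℕ} (hD : ∀ k ≤ n, dims k ≤ D) (y : EuclideanSpace ℝ (Fin (dims 0) ⊕ Fin (dims n)))
    (θ₀ : EuclideanSpace ℝ (NetIdx n dims)) :
    ‖gradient (mlLoss n dims sact y) θ₀‖
      ≤ D * (2 * (max M ‖y‖ + ‖y‖)) * (max M ‖y‖ * ((M * D + 1) * (1 + ‖θ₀‖)) ^ n) :=
  norm_gradient_le_of_lip' (by positivity)
    (.of_forall fun θ => abs_mlLoss_sub_le hM hsbd hslip hD y θ θ₀)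

end Network

theorem multilayer_gradient_polynomial_bound_general
    (n : ℕ) (hn : 1 < n) (dims : ℕ → ℕ)
    (sact : ℕ → ℝ → ℝ) (Ms : ℝ)
    (hsdiff : ∀ i, 1 ≤ i → i ≤ n → ContDiff ℝ 1 (sact i))
    (hsbd : ∀ i, 1 ≤ i → i ≤ n → ∀ x, |sact i x| ≤ Ms)
    (hs'bd : ∀ i, 1 ≤ i → i ≤ n → ∀ x, |deriv (sact i) x| ≤ Ms) :
    ∃ C > (0 : ℝ),
      ∀ (θ : EuclideanSpace ℝ (NetIdx n dims))
        (y : EuclideanSpace ℝ (Fin (dims 0) ⊕ Fin (dims n))),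
        ‖gradient (mlLoss n dims sact y) θ‖
          ≤ C * (1 + ‖y‖) ^ 2 * (1 + ‖θ‖ ^ (n + 1)) := by
  have hM : 0 ≤ Ms := (abs_nonneg _).trans (hsbd 1 le_rfl hn.le 0)
  have hslip (i : ℕ) (h₁ : 1 ≤ i) (h₂ : i ≤ n) (a b : ℝ) : |sact i a - sact i b| ≤ Ms * |a - b| :=
    abs_sub_le_of_abs_deriv_le ((hsdiff i h₁ h₂).differentiable one_ne_zero) (hs'bd i h₁ h₂) a b
  set D := (range (n + 1)).sup dims
  have hD (k : ℕ) (hk : k ≤ n) : dims k ≤ D := le_sup (mem_range.2 (Nat.lt_succ_of_le hk))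
  refine ⟨2 ^ (n + 2) * (D + 1) * (Ms + 1) ^ 2 * (Ms * D + 1) ^ n, by positivity, fun θ y => ?_⟩
  have hB : max Ms ‖y‖ ≤ (Ms + 1) * (1 + ‖y‖) :=
    max_le (by nlinarith [norm_nonneg y]) (by nlinarith [norm_nonneg y])
  calc ‖gradient (mlLoss n dims sact y) θ‖
      ≤ D * (2 * (max Ms ‖y‖ + ‖y‖)) * (max Ms ‖y‖ * ((Ms * D + 1) * (1 + ‖θ‖)) ^ n) :=
        norm_gradient_mlLoss_le hM hsbd hslip hD y θ
    _ ≤ (D + 1) * (2 * (2 * ((Ms + 1) * (1 + ‖y‖)))) * ((Ms + 1) * (1 + ‖y‖)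
          * ((Ms * D + 1) ^ n * (2 ^ n * (1 + ‖θ‖ ^ (n + 1))))) := by
        rw [mul_pow]
        gcongr
        · linarith
        · nlinarith [norm_nonneg y]
        · exact one_add_pow_le_two_pow_mul (norm_nonneg θ) n
    _ = 2 ^ (n + 2) * (D + 1) * (Ms + 1) ^ 2 * (Ms * D + 1) ^ n * (1 + ‖y‖) ^ 2
          * (1 + ‖θ‖ ^ (n + 1)) := by ring

/-- Lemma 4, i.e. Proposition 4 of Lovas–Lytras–Rásonyi–Sabanis: for
the n-layer network with bounded C¹ activations (|s_i|, |s_i'| ≤ M_s),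
|∇_θ |h(z,θ) − l|²| ≤ C (1 + |y|)² (1 + |θ|^{n+1}) for all θ, y = (z,l), where C > 0
depends only on D = max dims, n and M_s. -/
theorem multilayer_gradient_polynomial_bound
    (n : ℕ) (hn : 1 < n) (dims : ℕ → ℕ) (hdims : ∀ i ≤ n, 0 < dims i)
    (sact : ℕ → ℝ → ℝ) (Ms : ℝ)
    (hsdiff : ∀ i, 1 ≤ i → i ≤ n → ContDiff ℝ 1 (sact i))
    (hsbd : ∀ i, 1 ≤ i → i ≤ n → ∀ x, |sact i x| ≤ Ms)
    (hs'bd : ∀ i, 1 ≤ i → i ≤ n → ∀ x, |deriv (sact i) x| ≤ Ms) :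
    ∃ C > (0 : ℝ),
      ∀ (θ : EuclideanSpace ℝ (NetIdx n dims))
        (y : EuclideanSpace ℝ (Fin (dims 0) ⊕ Fin (dims n))),
        ‖gradient (mlLoss n dims sact y) θ‖
          ≤ C * (1 + ‖y‖) ^ 2 * (1 + ‖θ‖ ^ (n + 1)) :=
  multilayer_gradient_polynomial_bound_general n hn dims sact Ms hsdiff hsbd hs'bd
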